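/- arXiv:2310.03436 — 9 statements merged into one kernel-verified Lean document; each statement's English description precedes it below -/
import Mathlib

section
/- For every d ≥ 2 and s, t ≥ 1: if B is s-unistochastic and C is t-unistochastic (both d×d), then the convex combination (s/(s+t))·B + (t/(s+t))·C is (s+t)-unistochastic. -/
/-- `B` is an `s`-unistochastic `d × d` matrix. -/
def IsSUnistochastic (d s : ℕ) (B : Matrix (Fin d) (Fin d) ℝ) : Prop :=
  ∃ U : Matrix (Fin d × Fin s) (Fin d × Fin s) ℂ,
    U ∈ Matrix.unitaryGroup (Fin d × Fin s) ℂ ∧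
    ∀ i j, B i j = (1 / (s : ℝ)) * ∑ k, ∑ l, ‖U (i, k) (j, l)‖ ^ 2

theorem s_convexity (d s t : ℕ) (hd : 2 ≤ d) (hs : 1 ≤ s) (ht : 1 ≤ t)
    (B C : Matrix (Fin d) (Fin d) ℝ)
    (hB : IsSUnistochastic d s B) (hC : IsSUnistochastic d t C) :
    IsSUnistochastic d (s + t)
      (((s : ℝ) / ((s : ℝ) + t)) • B + ((t : ℝ) / ((s : ℝ) + t)) • C) := by
  obtain ⟨U, hU, hUB⟩ := hB
  obtain ⟨V, hV, hVC⟩ := hC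
  let e : Fin d × Fin (s + t) ≃ (Fin d × Fin s) ⊕ (Fin d × Fin t) :=
    ((Equiv.refl (Fin d)).prodCongr finSumFinEquiv.symm).trans
      (Equiv.prodSumDistrib _ _ _)
  have he₁ : ∀ (i : Fin d) (k : Fin s), e (i, Fin.castAdd t k) = Sum.inl (i, k) := by
    intro i k
    simp [e, Equiv.prodCongr_apply]
  have he₂ : ∀ (i : Fin d) (k : Fin t), e (i, Fin.natAdd s k) = Sum.inr (i, k) := by
    intro i k
    simp [e, Equiv.prodCongr_apply]
  refine ⟨(Matrix.fromBlocks U 0 0 V).submatrix e e, ?_, ?_⟩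
  · rw [Matrix.mem_unitaryGroup_iff] at hU hV ⊢
    rw [Matrix.star_eq_conjTranspose, Matrix.conjTranspose_submatrix,
      Matrix.submatrix_mul_equiv, Matrix.fromBlocks_conjTranspose,
      Matrix.fromBlocks_multiply]
    simp only [Matrix.conjTranspose_zero, Matrix.mul_zero, Matrix.zero_mul,
      add_zero, zero_add]
    rw [← Matrix.star_eq_conjTranspose U, ← Matrix.star_eq_conjTranspose V, hU, hV,
      Matrix.fromBlocks_one, Matrix.submatrix_one_equiv]
  · intro i j
    have hs' : (0 : ℝ) < s := by exact_mod_cast hs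
    have ht' : (0 : ℝ) < t := by exact_mod_cast ht
    have hst : (0 : ℝ) < (s : ℝ) + t := by linarith
    have key : ∑ k : Fin (s + t), ∑ l : Fin (s + t),
        ‖(Matrix.fromBlocks U 0 0 V).submatrix e e (i, k) (j, l)‖ ^ 2
        = (∑ k : Fin s, ∑ l : Fin s, ‖U (i, k) (j, l)‖ ^ 2)
          + (∑ k : Fin t, ∑ l : Fin t, ‖V (i, k) (j, l)‖ ^ 2) := by
      rw [Fin.sum_univ_add]
      congr 1
      · rw [Finset.sum_congr rfl fun k _ => Fin.sum_univ_add _]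
        simp [Matrix.submatrix_apply, he₁, he₂]
      · rw [Finset.sum_congr rfl fun k _ => Fin.sum_univ_add _]
        simp [Matrix.submatrix_apply, he₁, he₂]
    have hBij := hUB i j
    have hCij := hVC i j
    simp only [Matrix.add_apply, Matrix.smul_apply, smul_eq_mul, key,
      Nat.cast_add]
    rw [hBij, hCij]
    field_simp
end

section
/- For every d ≥ 2 and s, t ≥ 1, if a d×d matrix B is both s-unistochastic and t-unistochastic, then B is (s+t)-unistochastic: U_{d,s} ∩ U_{d,t} ⊆ U_{d,s+t}. -/
theorem inter_subset_sum (d s t : ℕ) (hd : 2 ≤ d) (hs : 1 ≤ s) (ht : 1 ≤ t)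
    (B : Matrix (Fin d) (Fin d) ℝ)
    (hBs : IsSUnistochastic d s B) (hBt : IsSUnistochastic d t B) :
    IsSUnistochastic d (s + t) B := by
  obtain ⟨U, hU, hUB⟩ := hBs
  obtain ⟨V, hV, hVB⟩ := hBt
  have hs0 : (s : ℝ) ≠ 0 := by exact_mod_cast Nat.one_le_iff_ne_zero.mp hs
  have ht0 : (t : ℝ) ≠ 0 := by exact_mod_cast Nat.one_le_iff_ne_zero.mp ht
  set e : Fin d × Fin (s + t) ≃ (Fin d × Fin s) ⊕ (Fin d × Fin t) :=
    ((Equiv.refl (Fin d)).prodCongr finSumFinEquiv.symm).trans (Equiv.prodSumDistrib _ _ _)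
    with hedef
  refine ⟨Matrix.reindex e.symm e.symm (Matrix.fromBlocks U 0 0 V), ?_, ?_⟩
  · rw [Matrix.mem_unitaryGroup_iff']
    rw [Matrix.mem_unitaryGroup_iff'] at hU hV
    simp only [Matrix.star_eq_conjTranspose, Matrix.conjTranspose_reindex,
      Matrix.conjTranspose_submatrix, Matrix.reindex_apply, Matrix.submatrix_mul_equiv,
      Matrix.fromBlocks_conjTranspose, Matrix.fromBlocks_multiply]
    simp [← Matrix.star_eq_conjTranspose, hU, hV, Matrix.submatrix_one_equiv]
  · intro i j
    have he1 : ∀ (i : Fin d) (k : Fin s), e (i, Fin.castAdd t k) = Sum.inl (i, k) := by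
      intro i k
      have : (Fin.castAdd t k) = finSumFinEquiv (Sum.inl k) := by simp
      rw [this]; simp [hedef]
    have he2 : ∀ (i : Fin d) (k : Fin t), e (i, Fin.natAdd s k) = Sum.inr (i, k) := by
      intro i k
      have : (Fin.natAdd s k) = finSumFinEquiv (Sum.inr k) := by simp
      rw [this]; simp [hedef]
    have hsum : (∑ k, ∑ l, ‖(Matrix.reindex e.symm e.symm (Matrix.fromBlocks U 0 0 V))
        (i, k) (j, l)‖ ^ 2)
        = (∑ k, ∑ l, ‖U (i, k) (j, l)‖ ^ 2) + (∑ k, ∑ l, ‖V (i, k) (j, l)‖ ^ 2) := by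
      rw [← Equiv.sum_comp finSumFinEquiv
        (fun k => ∑ l, ‖(Matrix.reindex e.symm e.symm (Matrix.fromBlocks U 0 0 V))
          (i, k) (j, l)‖ ^ 2)]
      rw [Fintype.sum_sum_type]
      congr 1
      · refine Finset.sum_congr rfl fun k _ => ?_
        rw [← Equiv.sum_comp finSumFinEquiv, Fintype.sum_sum_type]
        simp [he1, he2, Matrix.reindex_apply, Matrix.submatrix_apply]
      · refine Finset.sum_congr rfl fun k _ => ?_
        rw [← Equiv.sum_comp finSumFinEquiv, Fintype.sum_sum_type]
        simp [he1, he2, Matrix.reindex_apply, Matrix.submatrix_apply]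
    rw [hsum]
    have h1 : (∑ k, ∑ l, ‖U (i, k) (j, l)‖ ^ 2) = s * B i j := by
      rw [hUB i j]; field_simp
    have h2 : (∑ k, ∑ l, ‖V (i, k) (j, l)‖ ^ 2) = t * B i j := by
      rw [hVB i j]; field_simp
    rw [h1, h2]
    have hst : ((s : ℝ) + t) ≠ 0 := by positivity
    push_cast
    field_simp
end

section
/- For every d ≥ 2, the closure of the union over all s ≥ 1 of the sets of s-unistochastic d×d matrices equals the full Birkhoff polytope of d×d bistochastic matrices. Equivalently, for any bistochastic matrix B and any ε > 0, there exist s ≥ 1 and an s-unistochastic matrix B' with ‖B − B'‖_F ≤ ε. -/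
/-! Birkhoff's theorem writes `B = ∑ σ, w σ • P σ` as a convex combination of permutation
matrices. Rounding the weights to multiples `m σ / s` of `1 / s` turns this into an average
`(1 / s) ∑ k, P (g k)` of `s` permutation matrices (with repetitions), and such an average is
`s`-unistochastic: the permutation `(i, k) ↦ (g k i, k)` of `Fin d × Fin s` has a unitary
permutation matrix whose block `(i, j)` has squared Frobenius norm `#{k | g k i = j}`. Each
weight moves by at most `N / s` with `N = d!`, so every entry of `B - B'` is at most `N² / s`. -/

open Finset

namespace Matrix

variable {n R : Type*}

theorem permMatrix_mem_unitaryGroup [Fintype n] [DecidableEq n] [CommRing R] [StarRing R]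
    (σ : Equiv.Perm n) :
    σ.permMatrix R ∈ unitaryGroup n R := by
  rw [mem_unitaryGroup_iff', star_eq_conjTranspose, conjTranspose_permMatrix, ← permMatrix_mul,
    mul_inv_cancel, permMatrix_one]

theorem permMatrix_apply [DecidableEq n] [Zero R] [One R] (σ : Equiv.Perm n) (i j : n) :
    σ.permMatrix R i j = if σ i = j then 1 else 0 := by
  simp [Equiv.Perm.permMatrix, PEquiv.toMatrix_apply]

theorem abs_sum_smul_permMatrix_apply_le [Fintype n] [DecidableEq n] (c : Equiv.Perm n → ℝ)
    (i j : n) :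
    |(∑ σ, c σ • σ.permMatrix ℝ) i j| ≤ ∑ σ, |c σ| := by
  simp only [sum_apply, smul_apply, permMatrix_apply, smul_eq_mul]
  refine (abs_sum_le_sum_abs _ _).trans (sum_le_sum fun σ _ => ?_)
  split_ifs <;> simp

theorem sqrt_sum_sq_le_of_abs_le [Fintype n] (A : Matrix n n ℝ) {c : ℝ}
    (hA : ∀ i j, |A i j| ≤ c) :
    √(∑ i, ∑ j, A i j ^ 2) ≤ Fintype.card n * c := by
  rcases isEmpty_or_nonempty n with _ | ⟨⟨i₀⟩⟩
  · simp
  have hc : 0 ≤ c := (abs_nonneg _).trans (hA i₀ i₀)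
  have hsum : ∑ i, ∑ j, A i j ^ 2 ≤ (Fintype.card n * c) ^ 2 := calc
    ∑ i, ∑ j, A i j ^ 2 ≤ ∑ _i : n, ∑ _j : n, c ^ 2 :=
      sum_le_sum fun i _ => sum_le_sum fun j _ => sq_le_sq' (abs_le.mp (hA i j)).1
        (abs_le.mp (hA i j)).2
    _ = (Fintype.card n * c) ^ 2 := by simp [card_univ]; ring
  exact Real.sqrt_le_iff.mpr ⟨by positivity, hsum⟩

end Matrix

theorem isSUnistochastic_inv_smul_sum_permMatrix {d s : ℕ} (g : Fin s → Equiv.Perm (Fin d)) :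
    IsSUnistochastic d s ((s : ℝ)⁻¹ • ∑ k, (g k).permMatrix ℝ) := by
  set π : Equiv.Perm (Fin d × Fin s) := Equiv.prodCongrLeft fun k => g k with hπ
  refine ⟨π.permMatrix ℂ, Matrix.permMatrix_mem_unitaryGroup π, fun i j => ?_⟩
  have hblock : ∀ k, ∑ l, ‖π.permMatrix ℂ (i, k) (j, l)‖ ^ 2 = if g k i = j then 1 else 0 :=
    fun k => by
    simp_rw [Matrix.permMatrix_apply (R := ℂ), hπ, Equiv.prodCongrLeft_apply]
    simp [apply_ite (fun z : ℂ => ‖z‖ ^ 2), ite_and]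
  simp_rw [hblock, Matrix.smul_apply, Matrix.sum_apply, Matrix.permMatrix_apply, smul_eq_mul,
    one_div]

theorem exists_nat_div_approx_of_sum_eq_one {α : Type*} [Fintype α] [Nonempty α] (w : α → ℝ)
    (hw0 : ∀ a, 0 ≤ w a) (hw1 : ∑ a, w a = 1) {s : ℕ} (hs : 0 < s) :
    ∃ m : α → ℕ, ∑ a, m a = s ∧ ∀ a, |w a - m a / s| ≤ Fintype.card α / s := by
  classical
  obtain ⟨a₀⟩ := ‹Nonempty α›
  have hs' : (0 : ℝ) < s := Nat.cast_pos.mpr hs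
  set f : α → ℕ := fun a => ⌊s * w a⌋₊
  have hfrac : ∀ a, 0 ≤ w a - f a / s ∧ w a - f a / s ≤ 1 / s := fun a => by
    have hle := Nat.floor_le (mul_nonneg hs'.le (hw0 a))
    have hlt := Nat.lt_floor_add_one ((s : ℝ) * w a)
    constructor
    · rw [sub_nonneg, div_le_iff₀ hs']; linarith
    · rw [sub_le_iff_le_add, ← add_div, le_div_iff₀ hs']; linarith
  have hf_le : ∑ a, f a ≤ s := by
    have : ∑ a, (f a : ℝ) ≤ ∑ a, s * w a :=
      sum_le_sum fun a _ => Nat.floor_le (mul_nonneg hs'.le (hw0 a))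
    rw [← mul_sum, hw1, mul_one] at this
    exact_mod_cast this
  have hdeficit : ((s - ∑ a, f a : ℕ) : ℝ) / s = ∑ a, (w a - f a / s) := by
    rw [Nat.cast_sub hf_le, sum_sub_distrib, hw1, ← sum_div, sub_div, div_self hs'.ne',
      Nat.cast_sum]
  have hdeficit_le : ((s - ∑ a, f a : ℕ) : ℝ) / s ≤ Fintype.card α / s := by
    rw [hdeficit]
    calc ∑ a, (w a - f a / s) ≤ ∑ _a : α, 1 / (s : ℝ) := sum_le_sum fun a _ => (hfrac a).2
      _ = Fintype.card α / s := by simp [card_univ, div_eq_mul_inv]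
  refine ⟨f + Pi.single a₀ (s - ∑ a, f a), ?_, fun a => ?_⟩
  · simp only [Pi.add_apply, sum_add_distrib, sum_pi_single', mem_univ, if_true]
    omega
  have hcard : (1 : ℝ) / s ≤ Fintype.card α / s := by
    gcongr; exact_mod_cast Fintype.card_pos
  rw [Pi.add_apply, Nat.cast_add, add_div, ← sub_sub]
  refine abs_sub_le_of_nonneg_of_le (hfrac a).1 ((hfrac a).2.trans hcard) (by positivity) ?_
  rcases eq_or_ne a a₀ with rfl | ha
  · simpa using hdeficit_le
  · simp [ha]; positivity

theorem exists_fin_sum_comp_eq_sum_nsmul {α : Type*} [Fintype α] (m : α → ℕ) {s : ℕ}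
    (hs : ∑ a, m a = s) :
    ∃ g : Fin s → α, ∀ {M : Type*} [AddCommMonoid M] (F : α → M),
      ∑ l, F (g l) = ∑ a, m a • F a := by
  have hcard : Fintype.card ((a : α) × Fin (m a)) = s := by simp [hs]
  let e : Fin s ≃ (a : α) × Fin (m a) := (Fintype.equivFinOfCardEq hcard).symm
  refine ⟨fun l => (e l).1, fun F => ?_⟩
  rw [e.sum_comp (fun x => F x.1), ← univ_sigma_univ, sum_sigma]
  simp

theorem closure_union_is_birkhoff_general (d : ℕ)
    (B : Matrix (Fin d) (Fin d) ℝ)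
    (hBnonneg : ∀ i j, 0 ≤ B i j)
    (hBrow : ∀ i, ∑ j, B i j = 1)
    (hBcol : ∀ j, ∑ i, B i j = 1)
    (ε : ℝ) (hε : 0 < ε) :
    ∃ s : ℕ, 1 ≤ s ∧ ∃ B' : Matrix (Fin d) (Fin d) ℝ,
      IsSUnistochastic d s B' ∧
      Real.sqrt (∑ i, ∑ j, (B i j - B' i j) ^ 2) ≤ ε := by
  obtain ⟨w, hw0, hw1, rfl⟩ := exists_eq_sum_perm_of_mem_doublyStochastic
    (mem_doublyStochastic_iff_sum.mpr ⟨hBnonneg, hBrow, hBcol⟩)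
  set N := Fintype.card (Equiv.Perm (Fin d))
  obtain ⟨s, hs⟩ := exists_nat_gt ((d : ℝ) * N ^ 2 / ε)
  have hs_pos : (0 : ℝ) < s := (by positivity : (0 : ℝ) ≤ d * N ^ 2 / ε).trans_lt hs
  obtain ⟨m, hm_sum, hm_approx⟩ :=
    exists_nat_div_approx_of_sum_eq_one w hw0 hw1 (Nat.cast_pos.mp hs_pos)
  obtain ⟨g, hg⟩ := exists_fin_sum_comp_eq_sum_nsmul m hm_sum
  refine ⟨s, Nat.cast_pos.mp hs_pos, _, isSUnistochastic_inv_smul_sum_permMatrix g, ?_⟩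
  have hdiff : ∑ σ, w σ • σ.permMatrix ℝ - (s : ℝ)⁻¹ • ∑ l, (g l).permMatrix ℝ
      = ∑ σ, (w σ - m σ / s) • σ.permMatrix ℝ := by
    rw [hg fun σ => σ.permMatrix ℝ, smul_sum]
    simp only [sub_smul, sum_sub_distrib, ← Nat.cast_smul_eq_nsmul ℝ, smul_smul, div_eq_inv_mul]
  have hentry : ∀ i j, |(∑ σ, w σ • σ.permMatrix ℝ - (s : ℝ)⁻¹ • ∑ l, (g l).permMatrix ℝ) i j|
      ≤ N * (N / s) := fun i j => by
    rw [hdiff]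
    refine (Matrix.abs_sum_smul_permMatrix_apply_le _ i j).trans ?_
    simpa using sum_le_sum fun σ (_ : σ ∈ univ) => hm_approx σ
  calc _ ≤ (d : ℝ) * (N * (N / s)) := by
        simpa using Matrix.sqrt_sum_sq_le_of_abs_le _ hentry
    _ ≤ ε := by
        rw [div_lt_iff₀ hε] at hs
        rw [← mul_div_assoc, ← mul_div_assoc, div_le_iff₀ hs_pos]
        nlinarith

theorem closure_union_is_birkhoff (d : ℕ) (hd : 2 ≤ d)
    (B : Matrix (Fin d) (Fin d) ℝ)
    (hBnonneg : ∀ i j, 0 ≤ B i j)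
    (hBrow : ∀ i, ∑ j, B i j = 1)
    (hBcol : ∀ j, ∑ i, B i j = 1)
    (ε : ℝ) (hε : 0 < ε) :
    ∃ s : ℕ, 1 ≤ s ∧ ∃ B' : Matrix (Fin d) (Fin d) ℝ,
      IsSUnistochastic d s B' ∧
      Real.sqrt (∑ i, ∑ j, (B i j - B' i j) ^ 2) ≤ ε :=
  closure_union_is_birkhoff_general d B hBnonneg hBrow hBcol ε hε
end

section
/- Every unistochastic matrix is a bracelet matrix: if B_ij = |U_ij|² for some unitary U ∈ U(d), then for every pair of row indices i₁ ≠ i₂ and every column k, √(B_{i₁k}·B_{i₂k}) ≤ ∑_{j ≠ k} √(B_{i₁j}·B_{i₂j}), and the analogous inequality holds for every pair of columns. -/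
open Finset

lemma aux_sum_zero {d : ℕ} (f : Fin d → ℂ) (hf : ∑ j, f j = 0) (k : Fin d) :
    ‖f k‖ ≤ ∑ j ∈ Finset.univ.erase k, ‖f j‖ := by
  have h1 : f k + ∑ j ∈ Finset.univ.erase k, f j = 0 := by
    rw [Finset.add_sum_erase Finset.univ f (Finset.mem_univ k)]; exact hf
  have h2 : f k = -∑ j ∈ Finset.univ.erase k, f j := by linear_combination h1
  calc ‖f k‖ = ‖∑ j ∈ Finset.univ.erase k, f j‖ := by rw [h2, norm_neg]
    _ ≤ ∑ j ∈ Finset.univ.erase k, ‖f j‖ := norm_sum_le _ _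

theorem unistochastic_is_bracelet (d : ℕ) (U : Matrix (Fin d) (Fin d) ℂ)
    (hU : U ∈ Matrix.unitaryGroup (Fin d) ℂ)
    (B : Matrix (Fin d) (Fin d) ℝ)
    (hB : ∀ i j, B i j = ‖U i j‖ ^ 2) :
    (∀ i₁ i₂ : Fin d, i₁ ≠ i₂ → ∀ k : Fin d,
      Real.sqrt (B i₁ k * B i₂ k) ≤
        ∑ j ∈ Finset.univ.erase k, Real.sqrt (B i₁ j * B i₂ j)) ∧
    (∀ j₁ j₂ : Fin d, j₁ ≠ j₂ → ∀ k : Fin d,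
      Real.sqrt (B k j₁ * B k j₂) ≤
        ∑ i ∈ Finset.univ.erase k, Real.sqrt (B i j₁ * B i j₂)) := by
  have key : ∀ a b i j : Fin d, Real.sqrt (B a i * B b j) = ‖U a i * star (U b j)‖ := by
    intro a b i j
    rw [hB, hB, norm_mul, norm_star]
    rw [show ‖U a i‖ ^ 2 * ‖U b j‖ ^ 2 = (‖U a i‖ * ‖U b j‖) ^ 2 by ring]
    exact Real.sqrt_sq (by positivity)
  constructor
  · intro i₁ i₂ hne k
    have hrow : ∑ j, U i₁ j * star (U i₂ j) = 0 := by
      have h := Matrix.mem_unitaryGroup_iff.mp hU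
      have := congrFun (congrFun h i₁) i₂
      simpa [Matrix.mul_apply, Matrix.one_apply, hne, Matrix.star_apply] using this
    have := aux_sum_zero (fun j => U i₁ j * star (U i₂ j)) hrow k
    simpa only [key] using this
  · intro j₁ j₂ hne k
    have hcol : ∑ i, U i j₁ * star (U i j₂) = 0 := by
      have h := Matrix.mem_unitaryGroup_iff'.mp hU
      have h2 := congrFun (congrFun h j₁) j₂
      simp only [Matrix.mul_apply, Matrix.one_apply, Matrix.star_apply] at h2
      rw [if_neg hne] at h2
      calc ∑ i, U i j₁ * star (U i j₂) = star (∑ i, star (U i j₁) * U i j₂) := by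
            simp [star_sum, mul_comm]
        _ = 0 := by rw [h2]; simp
    have := aux_sum_zero (fun i => U i j₁ * star (U i j₂)) hcol k
    simpa only [key] using this
end

section
/- A pair of probability vectors (α, β) ∈ Δ_d² satisfies the generalized bracelet condition of order 1 if and only if it satisfies the classical bracelet condition: there exist complex numbers a₁,...,a_d, b₁,...,b_d with ∑|a_i|² = ∑|b_i|² = 1, ∑ a_i·conj(b_i) = 0, |a_i|² = α_i and |b_i|² = β_i, if and only if for every i, √(α_i β_i) ≤ ∑_{j≠i} √(α_j β_j). -/
/-!
The numbers `√(αᵢ βᵢ)` are the moduli of the terms of `∑ aᵢ conj bᵢ`, so the condition is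
necessary by the triangle inequality. Conversely, it says that these lengths close up into a
polygon in `ℂ`: split the sides into the longest one, a heaviest set of other sides of total
length at most half the perimeter, and the rest. Each class is at most half the perimeter, so
the three class lengths form a triangle, which closes by the intermediate value theorem. Giving
every side the direction `zᵢ` of its class, `aᵢ = √αᵢ zᵢ` and `bᵢ = √βᵢ` do the job.
-/

open Finset Complex

theorem exists_unit_triangle {p q r : ℝ} (hp : p ≤ q + r) (hq : q ≤ p + r) (hr : r ≤ p + q) :
    ∃ u v w : ℂ, ‖u‖ = 1 ∧ ‖v‖ = 1 ∧ ‖w‖ = 1 ∧ p * u + q * v + r * w = 0 := by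
  have hp0 : 0 ≤ p := by linarith
  have hq0 : 0 ≤ q := by linarith
  obtain ⟨θ, -, hθ⟩ : ∃ θ ∈ Set.Icc 0 Real.pi, ‖(p : ℂ) + q * exp (θ * I)‖ = r := by
    refine intermediate_value_Icc' Real.pi_pos.le (by fun_prop) ⟨?_, ?_⟩
    · have : (p : ℂ) + q * exp (Real.pi * I) = (p - q : ℝ) := by simp [sub_eq_add_neg]
      rw [this, norm_real, Real.norm_eq_abs, abs_sub_le_iff]
      constructor <;> linarith
    · have : (p : ℂ) + q * exp ((0 : ℝ) * I) = (p + q : ℝ) := by simp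
      rw [this, norm_real, Real.norm_of_nonneg (by linarith)]
      exact hr
  refine ⟨1, exp (θ * I), -exp (arg (p + q * exp (θ * I)) * I), by simp, norm_exp_ofReal_mul_I θ,
    by rw [norm_neg, norm_exp_ofReal_mul_I], ?_⟩
  rw [← hθ]
  linear_combination -(norm_mul_exp_arg_mul_I (p + q * exp (θ * I)))

theorem exists_fin_three_coloring_two_mul_sum_fiber_le {ι : Type*} [Fintype ι]
    (l : ι → ℝ) (h0 : ∀ i, 0 ≤ l i) (h : ∀ i, 2 * l i ≤ ∑ j, l j) :
    ∃ c : ι → Fin 3, ∀ k, 2 * ∑ i with c i = k, l i ≤ ∑ i, l i := by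
  classical
  rcases isEmpty_or_nonempty ι with hι | hι
  · exact ⟨isEmptyElim, fun k => by simp⟩
  obtain ⟨i₀, -, hi₀⟩ := exists_max_image univ l univ_nonempty
  obtain ⟨T, hT, hTmax⟩ := exists_max_image
    ({T ∈ (univ.erase i₀).powerset | 2 * ∑ i ∈ T, l i ≤ ∑ i, l i}) (fun T => ∑ i ∈ T, l i)
    ⟨∅, by simpa using sum_nonneg fun i _ => h0 i⟩
  rw [mem_filter, mem_powerset] at hT
  obtain ⟨hTsub, hThalf⟩ := hT
  have hi₀T : i₀ ∉ T := fun h => by simpa using hTsub h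
  let c : ι → Fin 3 := fun i => if i = i₀ then 0 else if i ∈ T then 1 else 2
  have fiber0 : ({i | c i = 0} : Finset ι) = {i₀} := by
    ext i; by_cases hi : i = i₀ <;> by_cases hiT : i ∈ T <;> simp [c, hi, hiT]
  have fiber1 : ({i | c i = 1} : Finset ι) = T := by
    ext i; by_cases hi : i = i₀ <;> by_cases hiT : i ∈ T <;> simp [c, hi, hiT, hi₀T]
  have hsum := sum_fiberwise univ c l
  rw [Fin.sum_univ_three, fiber0, fiber1, sum_singleton] at hsum
  -- otherwise some positive `l j` outside `T` could be added to `T`, since `l j ≤ l i₀`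
  have fiber2 : 2 * ∑ i with c i = 2, l i ≤ ∑ i, l i := by
    by_contra! hlt
    obtain ⟨j, hj, hjpos⟩ : ∃ j ∈ ({i | c i = 2} : Finset ι), 0 < l j :=
      exists_lt_of_sum_lt (by simp only [sum_const_zero]; linarith [h i₀, h0 i₀])
    have hjT : j ∉ T := by intro hjT; simp [c, hjT, ne_of_mem_of_not_mem hjT hi₀T] at hj
    have hji₀ : j ≠ i₀ := by rintro rfl; simp [c] at hj
    have := hTmax (insert j T) (by
      rw [mem_filter, mem_powerset, sum_insert hjT]
      exact ⟨insert_subset (mem_erase.2 ⟨hji₀, mem_univ j⟩) hTsub,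
        by linarith [hi₀ j (mem_univ j)]⟩)
    rw [sum_insert hjT] at this
    linarith
  refine ⟨c, fun k => ?_⟩
  fin_cases k
  · simpa [fiber0] using h i₀
  · simpa [fiber1] using hThalf
  · exact fiber2

theorem exists_unit_sum_mul_eq_zero {ι : Type*} [Fintype ι] [DecidableEq ι]
    (l : ι → ℝ) (h0 : ∀ i, 0 ≤ l i) (h : ∀ i, l i ≤ ∑ j ∈ univ.erase i, l j) :
    ∃ z : ι → ℂ, (∀ i, ‖z i‖ = 1) ∧ ∑ i, l i * z i = 0 := by
  obtain ⟨c, hc⟩ := exists_fin_three_coloring_two_mul_sum_fiber_le l h0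
    fun i => by linarith [h i, add_sum_erase univ l (mem_univ i)]
  let p : Fin 3 → ℝ := fun k => ∑ i with c i = k, l i
  have hp : ∑ i, l i = p 0 + p 1 + p 2 := by rw [← Fin.sum_univ_three, sum_fiberwise]
  obtain ⟨u, v, w, hu, hv, hw, huvw⟩ := exists_unit_triangle (p := p 0) (q := p 1) (r := p 2)
    (by linarith [hp ▸ hc 0]) (by linarith [hp ▸ hc 1]) (by linarith [hp ▸ hc 2])
  let y : Fin 3 → ℂ := ![u, v, w]
  have hy : ∀ k, ‖y k‖ = 1 := by
    intro k
    fin_cases k <;> simpa [y]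
  refine ⟨fun i => y (c i), fun i => hy (c i), ?_⟩
  calc ∑ i, (l i : ℂ) * y (c i) = ∑ k, (p k : ℂ) * y k := by
        rw [← sum_fiberwise univ c fun i => (l i : ℂ) * y (c i)]
        refine sum_congr rfl fun k _ => ?_
        rw [ofReal_sum, sum_mul]
        exact sum_congr rfl fun i hi => by rw [(mem_filter.1 hi).2]
    _ = 0 := by rw [Fin.sum_univ_three]; exact huvw

theorem norm_le_sum_erase_norm_of_sum_eq_zero {ι E : Type*} [DecidableEq ι]
    [SeminormedAddCommGroup E] {s : Finset ι} {x : ι → E} (h : ∑ j ∈ s, x j = 0) {i : ι}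
    (hi : i ∈ s) : ‖x i‖ ≤ ∑ j ∈ s.erase i, ‖x j‖ := by
  rw [← add_sum_erase s x hi, add_eq_zero_iff_eq_neg] at h
  rw [h, norm_neg]
  exact norm_sum_le _ _

theorem bracelet_order_one_iff_classical (d : ℕ) (α β : Fin d → ℝ)
    (hα0 : ∀ i, 0 ≤ α i) (hα1 : ∑ i, α i = 1)
    (hβ0 : ∀ i, 0 ≤ β i) (hβ1 : ∑ i, β i = 1) :
    (∃ a b : Fin d → ℂ,
      (∑ i, ‖a i‖ ^ 2 = 1) ∧ (∑ i, ‖b i‖ ^ 2 = 1) ∧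
      (∑ i, a i * starRingEnd ℂ (b i) = 0) ∧
      (∀ i, ‖a i‖ ^ 2 = α i) ∧ (∀ i, ‖b i‖ ^ 2 = β i)) ↔
    (∀ i : Fin d, Real.sqrt (α i * β i) ≤
      ∑ j ∈ Finset.univ.erase i, Real.sqrt (α j * β j)) := by
  constructor
  · rintro ⟨a, b, -, -, hab, haα, hbβ⟩ i
    have hnorm : ∀ j, ‖a j * starRingEnd ℂ (b j)‖ = Real.sqrt (α j * β j) := fun j => by
      rw [norm_mul, RCLike.norm_conj, ← haα, ← hbβ, ← mul_pow, Real.sqrt_sq (by positivity)]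
    simpa only [hnorm] using norm_le_sum_erase_norm_of_sum_eq_zero hab (mem_univ i)
  · intro h
    obtain ⟨z, hz, hzsum⟩ := exists_unit_sum_mul_eq_zero _ (fun i => Real.sqrt_nonneg _) h
    have haα : ∀ i, ‖(Real.sqrt (α i) : ℂ) * z i‖ ^ 2 = α i := fun i => by
      simp [hz, hα0]
    have hbβ : ∀ i, ‖(Real.sqrt (β i) : ℂ)‖ ^ 2 = β i := fun i => by
      simp [hβ0]
    refine ⟨fun i => Real.sqrt (α i) * z i, fun i => Real.sqrt (β i),
      by simp only [haα, hα1], by simp only [hbβ, hβ1], ?_, haα, hbβ⟩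
    rw [← hzsum]
    refine sum_congr rfl fun i _ => ?_
    rw [conj_ofReal, Real.sqrt_mul (hα0 i), ofReal_mul]
    ring
end

section
/- For all d ≥ 2 and s, t ≥ 1: if (α, β) ∈ Brac_{d,s} and (μ, ν) ∈ Brac_{d,t}, then (s/(s+t))·(α,β) + (t/(s+t))·(μ,ν) ∈ Brac_{d,s+t}. -/
open Matrix

/-- The pair of probability vectors `(α, β)` satisfies
the generalized bracelet condition of order `s`. -/
def Brac (d s : ℕ) (α β : Fin d → ℝ) : Prop :=
  (∀ i, 0 ≤ α i) ∧ (∑ i, α i = 1) ∧ (∀ i, 0 ≤ β i) ∧ (∑ i, β i = 1) ∧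
  ∃ A B : Fin d → Matrix (Fin s) (Fin s) ℂ,
    (∑ i, A i * (A i)ᴴ = 1) ∧ (∑ i, B i * (B i)ᴴ = 1) ∧ (∑ i, A i * (B i)ᴴ = 0) ∧
    (∀ i, (1 / (s : ℝ)) * ∑ k, ∑ l, ‖A i k l‖ ^ 2 = α i) ∧
    (∀ i, (1 / (s : ℝ)) * ∑ k, ∑ l, ‖B i k l‖ ^ 2 = β i)

section aux

variable {s t : ℕ}

private noncomputable def blk (M : Matrix (Fin s) (Fin s) ℂ) (N : Matrix (Fin t) (Fin t) ℂ) :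
    Matrix (Fin (s + t)) (Fin (s + t)) ℂ :=
  reindex finSumFinEquiv finSumFinEquiv (fromBlocks M 0 0 N)

private lemma blk_mul_conjTranspose (M M' : Matrix (Fin s) (Fin s) ℂ)
    (N N' : Matrix (Fin t) (Fin t) ℂ) :
    blk M N * (blk M' N')ᴴ = blk (M * M'ᴴ) (N * N'ᴴ) := by
  simp only [blk, conjTranspose_reindex, conjTranspose_submatrix, fromBlocks_conjTranspose,
    conjTranspose_zero, reindex_apply, submatrix_mul_equiv, fromBlocks_multiply,
    Matrix.mul_zero, Matrix.zero_mul, add_zero, zero_add]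

private lemma sum_blk {d : ℕ} (M : Fin d → Matrix (Fin s) (Fin s) ℂ)
    (N : Fin d → Matrix (Fin t) (Fin t) ℂ) :
    ∑ i, blk (M i) (N i) = blk (∑ i, M i) (∑ i, N i) := by
  ext k l
  simp only [Matrix.sum_apply, blk, reindex_apply, submatrix_apply]
  cases h : finSumFinEquiv.symm k <;> cases h' : finSumFinEquiv.symm l <;>
    simp [fromBlocks, h, h', Matrix.sum_apply]

private lemma blk_one : blk (1 : Matrix (Fin s) (Fin s) ℂ) (1 : Matrix (Fin t) (Fin t) ℂ) = 1 := by
  simp [blk, fromBlocks_one, submatrix_one_equiv]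

private lemma blk_zero : blk (0 : Matrix (Fin s) (Fin s) ℂ) (0 : Matrix (Fin t) (Fin t) ℂ) = 0 := by
  simp [blk]

private lemma frob_blk (M : Matrix (Fin s) (Fin s) ℂ) (N : Matrix (Fin t) (Fin t) ℂ) :
    ∑ k, ∑ l, ‖blk M N k l‖ ^ 2 =
      (∑ k, ∑ l, ‖M k l‖ ^ 2) + ∑ k, ∑ l, ‖N k l‖ ^ 2 := by
  rw [← Fintype.sum_equiv finSumFinEquiv
    (fun k => ∑ l : Fin s ⊕ Fin t, ‖blk M N (finSumFinEquiv k) (finSumFinEquiv l)‖ ^ 2)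
    (fun k => ∑ l, ‖blk M N k l‖ ^ 2)
    (fun k => Fintype.sum_equiv finSumFinEquiv _ _ (fun l => rfl))]
  simp only [blk, reindex_apply, submatrix_apply, Equiv.symm_apply_apply]
  rw [Fintype.sum_sum_type]
  simp [Fintype.sum_sum_type, fromBlocks_apply₁₁, fromBlocks_apply₁₂, fromBlocks_apply₂₁,
    fromBlocks_apply₂₂]

end aux

theorem brac_convexity (d s t : ℕ) (hd : 2 ≤ d) (hs : 1 ≤ s) (ht : 1 ≤ t)
    (α β μ ν : Fin d → ℝ)
    (h₁ : Brac d s α β) (h₂ : Brac d t μ ν) :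
    Brac d (s + t)
      (fun i => ((s : ℝ) / ((s : ℝ) + t)) * α i + ((t : ℝ) / ((s : ℝ) + t)) * μ i)
      (fun i => ((s : ℝ) / ((s : ℝ) + t)) * β i + ((t : ℝ) / ((s : ℝ) + t)) * ν i) := by
  obtain ⟨hα0, hα1, hβ0, hβ1, A, B, hA, hB, hAB, hAf, hBf⟩ := h₁
  obtain ⟨hμ0, hμ1, hν0, hν1, A', B', hA', hB', hAB', hAf', hBf'⟩ := h₂
  have hs0 : (0:ℝ) < s := by exact_mod_cast hs
  have ht0 : (0:ℝ) < t := by exact_mod_cast ht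
  have hst : (0:ℝ) < (s:ℝ) + t := by linarith
  have hw : (s:ℝ) / ((s:ℝ) + t) + (t:ℝ) / ((s:ℝ) + t) = 1 := by
    field_simp
  refine ⟨fun i => add_nonneg (mul_nonneg (by positivity) (hα0 i))
      (mul_nonneg (by positivity) (hμ0 i)),
    ?_,
    fun i => add_nonneg (mul_nonneg (by positivity) (hβ0 i))
      (mul_nonneg (by positivity) (hν0 i)),
    ?_,
    (fun i => blk (A i) (A' i)), (fun i => blk (B i) (B' i)), ?_, ?_, ?_, ?_, ?_⟩
  · rw [Finset.sum_add_distrib, ← Finset.mul_sum, ← Finset.mul_sum, hα1, hμ1]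
    simpa using hw
  · rw [Finset.sum_add_distrib, ← Finset.mul_sum, ← Finset.mul_sum, hβ1, hν1]
    simpa using hw
  · simp only [blk_mul_conjTranspose, sum_blk, hA, hA', blk_one]
  · simp only [blk_mul_conjTranspose, sum_blk, hB, hB', blk_one]
  · simp only [blk_mul_conjTranspose, sum_blk, hAB, hAB', blk_zero]
  · intro i
    rw [frob_blk]
    have h1 : ∑ k, ∑ l, ‖A i k l‖ ^ 2 = s * α i := by
      rw [← hAf i, ← mul_assoc, mul_one_div, div_self hs0.ne', one_mul]
    have h2 : ∑ k, ∑ l, ‖A' i k l‖ ^ 2 = t * μ i := by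
      rw [← hAf' i, ← mul_assoc, mul_one_div, div_self ht0.ne', one_mul]
    rw [h1, h2]
    push_cast
    field_simp
  · intro i
    rw [frob_blk]
    have h1 : ∑ k, ∑ l, ‖B i k l‖ ^ 2 = s * β i := by
      rw [← hBf i, ← mul_assoc, mul_one_div, div_self hs0.ne', one_mul]
    have h2 : ∑ k, ∑ l, ‖B' i k l‖ ^ 2 = t * ν i := by
      rw [← hBf' i, ← mul_assoc, mul_one_div, div_self ht0.ne', one_mul]
    rw [h1, h2]
    push_cast
    field_simp
end

section
/- Let X = diag(x₁,...,x_s) and Y = diag(y₁,...,y_s) be real diagonal s×s matrices. Then there exist unitary matrices U, V ∈ U(s) with X·U·Y = V if and only if there exists a permutation σ of {1,...,s} with |x_i · y_{σ(i)}| = 1 for every i. -/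
open Matrix

lemma perm_scaled_unitary {s : ℕ} (σ : Equiv.Perm (Fin s)) (c : Fin s → ℂ)
    (hc : ∀ i, c i * starRingEnd ℂ (c i) = 1) :
    (Matrix.of fun i j => if σ i = j then c i else 0) ∈ Matrix.unitaryGroup (Fin s) ℂ := by
  rw [Matrix.mem_unitaryGroup_iff]
  ext i j
  simp only [Matrix.mul_apply, Matrix.star_apply, Matrix.of_apply, Matrix.one_apply,
    apply_ite (star : ℂ → ℂ), star_zero, mul_ite, ite_mul, mul_zero, zero_mul]
  rw [Finset.sum_ite_eq (Finset.univ) (σ j)]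
  simp only [Finset.mem_univ, if_true]
  by_cases h : i = j
  · subst h
    simp [hc i]
  · have : ¬ σ i = σ j := fun hh => h (σ.injective hh)
    simp [h, this]

theorem diagonal_unitary_iff_perm (s : ℕ) (x y : Fin s → ℝ) :
    (∃ U ∈ Matrix.unitaryGroup (Fin s) ℂ, ∃ V ∈ Matrix.unitaryGroup (Fin s) ℂ,
      Matrix.diagonal (fun i => (x i : ℂ)) * U * Matrix.diagonal (fun i => (y i : ℂ)) = V) ↔
    (∃ σ : Equiv.Perm (Fin s), ∀ i, |x i * y (σ i)| = 1) := by
  constructor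
  · rintro ⟨U, hU, V, hV, h⟩
    set D1 : Matrix (Fin s) (Fin s) ℂ := Matrix.diagonal (fun i => (x i : ℂ)) with hD1
    set D2 : Matrix (Fin s) (Fin s) ℂ := Matrix.diagonal (fun i => (y i : ℂ)) with hD2
    have hsD1 : star D1 = D1 := by
      simp [hD1, Matrix.star_eq_conjTranspose, Matrix.diagonal_conjTranspose,
        funext fun i => Complex.conj_ofReal (x i)]
    have hsD2 : star D2 = D2 := by
      simp [hD2, Matrix.star_eq_conjTranspose, Matrix.diagonal_conjTranspose,
        funext fun i => Complex.conj_ofReal (y i)]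
    have hVV : V * star V = 1 := Matrix.mem_unitaryGroup_iff.mp hV
    have key : D1 * (U * (D2 * (D2 * (star U * D1)))) = 1 := by
      rw [← h] at hVV
      simp only [Matrix.star_mul, hsD1, hsD2] at hVV
      rw [← hVV]; noncomm_ring
    -- determinants
    have hdet : D1.det * (U.det * (D2.det * (D2.det * ((star U).det * D1.det)))) = 1 := by
      have := congrArg Matrix.det key
      simpa [Matrix.det_mul] using this
    have hxne : ∀ i, (x i : ℂ) ≠ 0 := by
      intro i hx0
      have : D1.det = 0 := by
        rw [hD1, Matrix.det_diagonal]
        exact Finset.prod_eq_zero (Finset.mem_univ i) hx0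
      rw [this] at hdet; simp at hdet
    -- invert D1
    set E1 : Matrix (Fin s) (Fin s) ℂ := Matrix.diagonal (fun i => (x i : ℂ)⁻¹) with hE1
    have hED : E1 * D1 = 1 := by
      rw [hE1, hD1, Matrix.diagonal_mul_diagonal]
      rw [show (fun i => (x i : ℂ)⁻¹ * (x i : ℂ)) = fun _ => (1 : ℂ) from
        funext fun i => inv_mul_cancel₀ (hxne i)]
      exact Matrix.diagonal_one
    have hDE : D1 * E1 = 1 := by
      rw [hE1, hD1, Matrix.diagonal_mul_diagonal]
      rw [show (fun i => (x i : ℂ) * (x i : ℂ)⁻¹) = fun _ => (1 : ℂ) from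
        funext fun i => mul_inv_cancel₀ (hxne i)]
      exact Matrix.diagonal_one
    have hUU : star U * U = 1 := Matrix.mem_unitaryGroup_iff'.mp hU
    have k1 : U * (D2 * (D2 * (star U * D1))) = E1 := by
      have := congrArg (fun M => E1 * M) key
      simpa [← mul_assoc, hED] using this
    have k2 : U * (D2 * (D2 * star U)) = E1 * E1 := by
      have := congrArg (fun M => M * E1) k1
      simp only [mul_assoc, hDE, mul_one] at this
      exact this
    have k3 : U * (D2 * D2) = E1 * (E1 * U) := by
      have := congrArg (fun M => M * U) k2
      simp only [mul_assoc, hUU, mul_one] at this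
      exact this
    have hent : ∀ i j, U i j * ((y j : ℂ) * (y j : ℂ)) =
        (x i : ℂ)⁻¹ * ((x i : ℂ)⁻¹ * U i j) := by
      intro i j
      have := congrFun (congrFun k3 i) j
      simpa [hD2, hE1, Matrix.diagonal_mul_diagonal, Matrix.mul_diagonal,
        Matrix.diagonal_mul] using this
    have hdU : U.det ≠ 0 := by
      have : (star U).det * U.det = 1 := by rw [← Matrix.det_mul, hUU, Matrix.det_one]
      exact right_ne_zero_of_mul_eq_one this
    have hσ : ∃ σ : Equiv.Perm (Fin s), ∀ i, U (σ i) i ≠ 0 := by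
      by_contra hcon
      push_neg at hcon
      apply hdU
      rw [Matrix.det_apply]
      refine Finset.sum_eq_zero fun σ _ => ?_
      obtain ⟨i, hi⟩ := hcon σ
      rw [show (∏ k, U (σ k) k) = 0 from Finset.prod_eq_zero (Finset.mem_univ i) hi, smul_zero]
    obtain ⟨σ, hσ⟩ := hσ
    refine ⟨σ.symm, fun i => ?_⟩
    have hUne : U i (σ.symm i) ≠ 0 := by
      have := hσ (σ.symm i)
      rwa [Equiv.apply_symm_apply] at this
    set j := σ.symm i
    have hyy : (y j : ℂ) * (y j : ℂ) = (x i : ℂ)⁻¹ * (x i : ℂ)⁻¹ := by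
      have h1 := hent i j
      rw [show (x i : ℂ)⁻¹ * ((x i : ℂ)⁻¹ * U i j) =
        U i j * ((x i : ℂ)⁻¹ * (x i : ℂ)⁻¹) from by ring] at h1
      exact mul_left_cancel₀ hUne h1
    have hsqC : ((x i : ℂ) * (y j : ℂ)) ^ 2 = 1 := by
      calc ((x i : ℂ) * (y j : ℂ)) ^ 2
          = (x i : ℂ) * (x i : ℂ) * ((y j : ℂ) * (y j : ℂ)) := by ring
        _ = (x i : ℂ) * (x i : ℂ) * ((x i : ℂ)⁻¹ * (x i : ℂ)⁻¹) := by rw [hyy]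
        _ = 1 := by
          rw [← mul_inv, mul_inv_cancel₀ (mul_ne_zero (hxne i) (hxne i))]
    have hsq : ((x i * y j : ℝ) : ℂ) ^ 2 = 1 := by push_cast; exact hsqC
    have hsqR : (x i * y j) ^ 2 = 1 := by exact_mod_cast hsq
    have h1 : (x i * y j - 1) * (x i * y j + 1) = 0 := by linear_combination hsqR
    rcases mul_eq_zero.mp h1 with h2 | h2
    · rw [show x i * y j = 1 from by linarith]; simp
    · rw [show x i * y j = -1 from by linarith]; simp
  · rintro ⟨σ, hσ⟩
    have hprod : ∀ i, (x i * y (σ i)) * (x i * y (σ i)) = 1 := by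
      intro i
      have := hσ i
      nlinarith [abs_nonneg (x i * y (σ i)), sq_abs (x i * y (σ i))]
    have hne : ∀ i, x i * y (σ i) ≠ 0 := by
      intro i h0
      have := hσ i
      rw [h0] at this
      simp at this
    set c : Fin s → ℂ := fun i => (((x i * y (σ i))⁻¹ : ℝ) : ℂ) with hc
    have hcU : ∀ i, c i * starRingEnd ℂ (c i) = 1 := by
      intro i
      rw [hc]
      simp only [Complex.conj_ofReal]
      rw [← Complex.ofReal_mul, ← mul_inv, hprod i, inv_one, Complex.ofReal_one]
    refine ⟨Matrix.of fun i j => if σ i = j then c i else 0, perm_scaled_unitary σ c hcU,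
      Matrix.of fun i j => if σ i = j then (1 : ℂ) else 0,
      perm_scaled_unitary σ (fun _ => 1) (fun i => by simp), ?_⟩
    ext i j
    simp only [Matrix.mul_diagonal, Matrix.diagonal_mul, Matrix.of_apply, ite_mul, mul_ite,
      mul_zero, zero_mul]
    by_cases hij : σ i = j
    · subst hij
      simp only [if_pos rfl, hc]
      rw [show ((x i : ℂ)) * (((x i * y (σ i))⁻¹ : ℝ) : ℂ) * (y (σ i) : ℂ)
          = ((x i * y (σ i) : ℝ) : ℂ) * (((x i * y (σ i))⁻¹ : ℝ) : ℂ) from by push_cast; ring,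
        ← Complex.ofReal_mul, mul_inv_cancel₀ (hne i), Complex.ofReal_one]
    · simp [hij]
end

section
/- For d = 2 and every s ≥ 1, the generalized bracelet set is the same as for s = 1: Brac_{2,s} = {((p, 1−p), (1−p, p)) : p ∈ [0,1]}. In particular, if A₁, A₂, B₁, B₂ are s×s complex matrices with A₁A₁* + A₂A₂* = B₁B₁* + B₂B₂* = I_s and A₁B₁* + A₂B₂* = 0, then (1/s)·Tr(A₁A₁*) + (1/s)·Tr(B₁B₁*) = 1. -/
/-!
Stack the four blocks into `U = [A₁ A₂; B₁ B₂]`. The hypotheses say `U Uᴴ = 1`, so in finite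
dimension also `Uᴴ U = 1`; its top-left block `A₁ᴴ A₁ + B₁ᴴ B₁ = 1` has trace `s`, which is
`s (α₀ + β₀)`. Conversely, the scalar matrices built from the real orthogonal matrix
`[√p √(1-p); √(1-p) -√p]` realise `((p, 1-p), (1-p, p))` in every size `s`.
-/

open Matrix

namespace Matrix

variable {n R : Type*} [Fintype n] [DecidableEq n]

theorem conjTranspose_mul_add_conjTranspose_mul_eq_one [CommRing R] [StarRing R]
    {A₁ A₂ B₁ B₂ : Matrix n n R} (hA : A₁ * A₁ᴴ + A₂ * A₂ᴴ = 1)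
    (hB : B₁ * B₁ᴴ + B₂ * B₂ᴴ = 1) (hAB : A₁ * B₁ᴴ + A₂ * B₂ᴴ = 0) :
    A₁ᴴ * A₁ + B₁ᴴ * B₁ = 1 := by
  have hBA : B₁ * A₁ᴴ + B₂ * A₂ᴴ = 0 := by
    simpa only [conjTranspose_add, conjTranspose_mul, conjTranspose_conjTranspose,
      conjTranspose_zero] using congrArg conjTranspose hAB
  have hU : fromBlocks A₁ A₂ B₁ B₂ * (fromBlocks A₁ A₂ B₁ B₂)ᴴ = 1 := by
    rw [fromBlocks_conjTranspose, fromBlocks_multiply, hA, hB, hAB, hBA, fromBlocks_one]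
  have hU' := mul_eq_one_comm.mp hU
  rw [fromBlocks_conjTranspose, fromBlocks_multiply, ← fromBlocks_one] at hU'
  exact (fromBlocks_inj.mp hU').1

theorem trace_mul_conjTranspose_add_eq_card [CommRing R] [StarRing R]
    {A₁ A₂ B₁ B₂ : Matrix n n R} (hA : A₁ * A₁ᴴ + A₂ * A₂ᴴ = 1)
    (hB : B₁ * B₁ᴴ + B₂ * B₂ᴴ = 1) (hAB : A₁ * B₁ᴴ + A₂ * B₂ᴴ = 0) :
    (A₁ * A₁ᴴ).trace + (B₁ * B₁ᴴ).trace = Fintype.card n := by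
  rw [trace_mul_comm A₁, trace_mul_comm B₁, ← trace_add,
    conjTranspose_mul_add_conjTranspose_mul_eq_one hA hB hAB, trace_one]

omit [DecidableEq n] in
theorem trace_mul_conjTranspose_self_eq_sum_norm_sq {m 𝕜 : Type*} [Fintype m] [RCLike 𝕜]
    (A : Matrix n m 𝕜) : (A * Aᴴ).trace = ((∑ i, ∑ j, ‖A i j‖ ^ 2 : ℝ) : 𝕜) := by
  simp only [trace, diag, mul_apply, conjTranspose_apply, RCLike.star_def, RCLike.mul_conj]
  push_cast
  rfl

theorem smul_one_mul_conjTranspose_smul_one [CommRing R] [StarRing R] (a b : R) :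
    (a • (1 : Matrix n n R)) * (b • 1)ᴴ = (a * star b) • 1 := by
  rw [conjTranspose_smul, conjTranspose_one, smul_mul_smul_comm, one_mul]

theorem sum_sum_norm_sq_smul_one {𝕜 : Type*} [RCLike 𝕜] (a : 𝕜) :
    ∑ i, ∑ j, ‖(a • (1 : Matrix n n 𝕜)) i j‖ ^ 2 = Fintype.card n * ‖a‖ ^ 2 := by
  simp [one_apply, apply_ite (fun x : 𝕜 => ‖x‖ ^ 2)]

end Matrix

theorem Brac.apply_zero_add_apply_zero_eq_one {s : ℕ} (hs : 0 < s) {α β : Fin 2 → ℝ}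
    (h : Brac 2 s α β) : α 0 + β 0 = 1 := by
  obtain ⟨-, -, -, -, A, B, hA, hB, hAB, hα, hβ⟩ := h
  simp only [Fin.sum_univ_two] at hA hB hAB
  have hcard := trace_mul_conjTranspose_add_eq_card hA hB hAB
  rw [trace_mul_conjTranspose_self_eq_sum_norm_sq, trace_mul_conjTranspose_self_eq_sum_norm_sq,
    Fintype.card_fin] at hcard
  have hcardℝ : ∑ k, ∑ l, ‖A 0 k l‖ ^ 2 + ∑ k, ∑ l, ‖B 0 k l‖ ^ 2 = (s : ℝ) := by
    apply RCLike.ofReal_injective (K := ℂ)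
    rw [RCLike.ofReal_add, hcard, RCLike.ofReal_natCast]
  rw [← hα, ← hβ, ← mul_add, hcardℝ]
  field_simp

theorem brac_sq_of_orthonormal {d s : ℕ} (hs : 0 < s) {a b : Fin d → ℝ}
    (ha : ∑ i, a i ^ 2 = 1) (hb : ∑ i, b i ^ 2 = 1) (hab : ∑ i, a i * b i = 0) :
    Brac d s (fun i => a i ^ 2) (fun i => b i ^ 2) := by
  have hsum (u v : Fin d → ℝ) : ∑ i, ((u i : ℂ) • (1 : Matrix (Fin s) (Fin s) ℂ)) *
      ((v i : ℂ) • 1)ᴴ = ((∑ i, u i * v i : ℝ) : ℂ) • 1 := by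
    simp only [smul_one_mul_conjTranspose_smul_one, Complex.star_def, Complex.conj_ofReal,
      ← Finset.sum_smul]
    push_cast; rfl
  have hnorm (u : ℝ) : (1 / (s : ℝ)) * ∑ k, ∑ l,
      ‖((u : ℂ) • (1 : Matrix (Fin s) (Fin s) ℂ)) k l‖ ^ 2 = u ^ 2 := by
    rw [sum_sum_norm_sq_smul_one, Fintype.card_fin, Complex.norm_real, Real.norm_eq_abs, sq_abs]
    field_simp
  refine ⟨fun i => sq_nonneg _, ha, fun i => sq_nonneg _, hb, fun i => (a i : ℂ) • 1,
    fun i => (b i : ℂ) • 1, ?_, ?_, ?_, fun i => hnorm _, fun i => hnorm _⟩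
  · simp only [hsum, ← sq, ha, Complex.ofReal_one, one_smul]
  · simp only [hsum, ← sq, hb, Complex.ofReal_one, one_smul]
  · simp only [hsum, hab, Complex.ofReal_zero, zero_smul]

theorem brac_two_s (s : ℕ) (hs : 1 ≤ s) :
    (∀ α β : Fin 2 → ℝ,
      Brac 2 s α β ↔ ∃ p ∈ Set.Icc (0 : ℝ) 1, α = ![p, 1 - p] ∧ β = ![1 - p, p]) ∧
    (∀ A₁ A₂ B₁ B₂ : Matrix (Fin s) (Fin s) ℂ,
      A₁ * A₁ᴴ + A₂ * A₂ᴴ = 1 → B₁ * B₁ᴴ + B₂ * B₂ᴴ = 1 → A₁ * B₁ᴴ + A₂ * B₂ᴴ = 0 →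
      (1 / (s : ℂ)) * (A₁ * A₁ᴴ).trace + (1 / (s : ℂ)) * (B₁ * B₁ᴴ).trace = 1) := by
  refine ⟨fun α β => ⟨fun h => ?_, ?_⟩, fun A₁ A₂ B₁ B₂ hA hB hAB => ?_⟩
  · have h0 := h.apply_zero_add_apply_zero_eq_one hs
    obtain ⟨hα, hα1, -, hβ1, -⟩ := h
    simp only [Fin.sum_univ_two] at hα1 hβ1
    refine ⟨α 0, ⟨hα 0, by linarith [hα 1]⟩, ?_, ?_⟩ <;> ext i <;> fin_cases i <;> simp <;>
      linarith
  · rintro ⟨p, ⟨hp0, hp1⟩, rfl, rfl⟩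
    have hq : 0 ≤ 1 - p := sub_nonneg.2 hp1
    convert brac_sq_of_orthonormal hs (a := ![√p, √(1 - p)]) (b := ![√(1 - p), -√p])
      ?_ ?_ ?_ using 1
    · ext i; fin_cases i <;> simp [hp0, hq]
    · ext i; fin_cases i <;> simp [hp0, hq]
    all_goals simp [Fin.sum_univ_two, hp0, hq, mul_comm]
  · have hs' : (s : ℂ) ≠ 0 := Nat.cast_ne_zero.2 (by omega)
    rw [← mul_add, trace_mul_conjTranspose_add_eq_card hA hB hAB, Fintype.card_fin]
    field_simp
end

section
/- For every q ∈ [0,1], with w± = (1/2)(1 − q ± √(1 + 2q − 3q²)), the 6×6 real matrix U_q whose odd-indexed and even-indexed 3×3 principal submatrices are the circulant matrices circ(q, w₋, w₊) and circ(q, w₊, w₋) respectively (and zeros elsewhere) is orthogonal, and φ_{3,2}(U_q) is the 3×3 bistochastic matrix with diagonal entries q² and off-diagonal entries (1−q²)/2. Consequently, every 3×3 matrix of the form x·I + y·(J−I) with x + 2y = 1, x,y ≥ 0, x ∈ [0,1] a square (x = q²) is 2-unistochastic. -/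
open Matrix

theorem circulant_family_is_two_unistochastic (q : ℝ) (hq : q ∈ Set.Icc (0 : ℝ) 1)
    (wp wm : ℝ)
    (hwp : wp = (1 - q + Real.sqrt (1 + 2 * q - 3 * q ^ 2)) / 2)
    (hwm : wm = (1 - q - Real.sqrt (1 + 2 * q - 3 * q ^ 2)) / 2)
    (M₀ M₁ : Matrix (Fin 3) (Fin 3) ℝ)
    (hM₀ : M₀ = !![q, wm, wp; wp, q, wm; wm, wp, q])
    (hM₁ : M₁ = !![q, wp, wm; wm, q, wp; wp, wm, q])
    (U : Matrix (Fin 3 × Fin 2) (Fin 3 × Fin 2) ℝ)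
    (hU : ∀ (i j : Fin 3) (k l : Fin 2),
      U (i, k) (j, l) = if k = l then (if k = 0 then M₀ i j else M₁ i j) else 0) :
    U ∈ Matrix.orthogonalGroup (Fin 3 × Fin 2) ℝ ∧
    (∀ i j : Fin 3, (1 / (2 : ℝ)) * ∑ k, ∑ l, ‖U (i, k) (j, l)‖ ^ 2 =
      if i = j then q ^ 2 else (1 - q ^ 2) / 2) ∧
    (∀ x y : ℝ, x = q ^ 2 → 0 ≤ y → x + 2 * y = 1 →
      IsSUnistochastic 3 2
        (x • (1 : Matrix (Fin 3) (Fin 3) ℝ) +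
          y • (Matrix.of (fun _ _ => (1 : ℝ)) - 1))) := by
  obtain ⟨hq0, hq1⟩ := hq
  have hs : Real.sqrt (1 + 2 * q - 3 * q ^ 2) ^ 2 = 1 + 2 * q - 3 * q ^ 2 :=
    Real.sq_sqrt (by nlinarith)
  have h1 : q ^ 2 + wp ^ 2 + wm ^ 2 = 1 := by
    subst hwp hwm; linear_combination hs / 2
  have h2 : q * wp + q * wm + wp * wm = 0 := by
    subst hwp hwm; linear_combination - hs / 4
  have hUU : U * Uᵀ = 1 := by
    ext a b
    fin_cases a <;> fin_cases b <;>
      simp [Matrix.mul_apply, Matrix.one_apply, Fintype.sum_prod_type, hU, hM₀, hM₁,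
        Fin.sum_univ_succ, Prod.ext_iff] <;>
      (first
        | linear_combination h1
        | linear_combination h2)
  have hphi : ∀ i j : Fin 3, (1 / (2 : ℝ)) * ∑ k, ∑ l, ‖U (i, k) (j, l)‖ ^ 2 =
      if i = j then q ^ 2 else (1 - q ^ 2) / 2 := by
    intro i j
    fin_cases i <;> fin_cases j <;>
      simp [hU, hM₀, hM₁, Fin.sum_univ_succ, Real.norm_eq_abs, sq_abs] <;>
      (first
        | ring1
        | linear_combination h1 / 2)
  refine ⟨?_, hphi, ?_⟩
  · rw [Matrix.mem_orthogonalGroup_iff]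
    simpa using hUU
  · intro x y hx hy hxy
    refine ⟨U.map Complex.ofReal, ?_, ?_⟩
    · rw [Matrix.mem_unitaryGroup_iff]
      ext a b
      have h := congrFun (congrFun hUU a) b
      simp only [Matrix.mul_apply, Matrix.transpose_apply, Matrix.one_apply] at h
      simp only [Matrix.mul_apply, Matrix.star_apply, Matrix.map_apply, Complex.star_def,
        Complex.conj_ofReal, Matrix.one_apply, ← Complex.ofReal_mul, ← Complex.ofReal_sum]
      rw [h]
      split <;> simp
    · intro i j
      have hy' : y = (1 - q ^ 2) / 2 := by linarith
      have hval := hphi i j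
      have hkey : (1 / ((2 : ℕ) : ℝ)) *
          ∑ k, ∑ l, ‖(U.map Complex.ofReal) (i, k) (j, l)‖ ^ 2
          = if i = j then q ^ 2 else (1 - q ^ 2) / 2 := by
        rw [show ((2 : ℕ) : ℝ) = 2 by norm_num, ← hval]
        congr 1
        simp [Matrix.map_apply, Complex.norm_real]
      rw [hkey]
      by_cases h : i = j <;>
        simp [h, hx, hy', Matrix.add_apply, Matrix.smul_apply, Matrix.one_apply,
          Matrix.sub_apply]
end
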